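/- Assume the Framework. Let p be a nonzero polynomial all of whose zeros lie in Ω, with distinct zeros u₁, …, u_k of multiplicities r₁, …, r_k, and let p_H ∈ H be the element with ι p_H = p. For 0 ≤ s ≤ r_i − 1 let k_{s,u_i} ∈ H be the Riesz representer of the bounded functional f ↦ (ι f)^{(s)}(u_i). Then the orthogonal complement of [p_H] (the closed linear span of {S^j p_H : j ≥ 0}) equals the linear span of the finite set {k_{s,u_i} : 1 ≤ i ≤ k, 0 ≤ s ≤ r_i − 1}. -/

import Mathlib

open scoped ComplexInnerProductSpace

/-- A Hilbert space `H` of analytic functions on a bounded domain `Ω ⊆ ℂ` with `0 ∈ Ω`,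
realized by an injective linear map `ι` into functions, satisfying conditions
(P1)–(P4) of Cheng–Mashreghi–Ross, together with its reproducing kernels. -/
structure RKFramework (Ω : Set ℂ) (H : Type*) [NormedAddCommGroup H]
    [InnerProductSpace ℂ H] [CompleteSpace H] where
  /-- `Ω` is open. -/
  isOpen : IsOpen Ω
  /-- `Ω` is connected. -/
  isConnected : IsConnected Ω
  /-- `Ω` is bounded. -/
  isBounded : Bornology.IsBounded Ω
  /-- `0 ∈ Ω`. -/
  zero_mem : (0 : ℂ) ∈ Ω
  /-- the realization of elements of `H` as functions (only values on `Ω` matter). -/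
  ι : H →ₗ[ℂ] (ℂ → ℂ)
  /-- `ι` is injective as a map into functions on `Ω`. -/
  ι_inj : ∀ f g : H, Set.EqOn (ι f) (ι g) Ω → f = g
  /-- each `ι f` is analytic on `Ω`. -/
  analytic : ∀ f : H, DifferentiableOn ℂ (ι f) Ω
  /-- (P1): point evaluation of every derivative is a bounded functional. -/
  eval_bounded : ∀ w ∈ Ω, ∀ j : ℕ, ∃ C : ℝ, ∀ f : H,
    ‖iteratedDerivWithin j (ι f) Ω w‖ ≤ C * ‖f‖
  /-- (P2): the shift operator `S`. -/
  S : H →L[ℂ] H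
  ι_S : ∀ f : H, ∀ z ∈ Ω, ι (S f) z = z * ι f z
  /-- (P3): the monomials `z^j` belong to `H` … -/
  p : ℕ → H
  ι_p : ∀ j : ℕ, ∀ z ∈ Ω, ι (p j) z = z ^ j
  /-- … and the polynomials are dense in `H`. -/
  span_p : (Submodule.span ℂ (Set.range p)).topologicalClosure = ⊤
  /-- (P4): the difference-quotient operators `Q_w`. -/
  Q : ℂ → H →L[ℂ] H
  ι_Q : ∀ w ∈ Ω, ∀ f : H, ∀ z ∈ Ω, z ≠ w → ι (Q w f) z = (ι f z - ι f w) / (z - w)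
  /-- the reproducing kernel `k_w` at `w ∈ Ω` … -/
  k : ℂ → H
  /-- … satisfying `⟪f, k_w⟫ = (ι f)(w)` (with the paper's inner product linear in its
  first slot; Mathlib's inner product is linear in the second slot). -/
  reproducing : ∀ w ∈ Ω, ∀ f : H, ⟪k w, f⟫ = ι f w

variable {Ω : Set ℂ} {H : Type*} [NormedAddCommGroup H] [InnerProductSpace ℂ H] [CompleteSpace H]

/-- `[zf]`: the closed linear span of `{S^n f : n ≥ 1}`. -/
abbrev RKFramework.zspan (F : RKFramework Ω H) (f : H) : Submodule ℂ H :=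
  (Submodule.span ℂ {x | ∃ n : ℕ, 1 ≤ n ∧ x = (F.S ^ n) f}).topologicalClosure

/-- `[f]`: the closed linear span of `{S^n f : n ≥ 0}`. -/
abbrev RKFramework.fullSpan (F : RKFramework Ω H) (f : H) : Submodule ℂ H :=
  (Submodule.span ℂ (Set.range fun n : ℕ => (F.S ^ n) f)).topologicalClosure

/-- The `S`-inner function `J = f − P_{[zf]} f` associated with `f`. -/
noncomputable def RKFramework.J (F : RKFramework Ω H) (f : H) : H :=
  f - ((F.zspan f).orthogonalProjectionOnto f : H)

/-!
For a polynomial `t`, the reproducing property gives `⟪k_{s,uᵢ}, t⟫ = t^{(s)}(uᵢ)`, and these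
values all vanish exactly when `q ∣ t`. Since `S` acts on polynomials as multiplication by `z`,
the multiples of `q` lie in `[p_H]`, which gives one inclusion. Conversely, for `g ⊥ [p_H]` the
functional `t ↦ ⟪g, t⟫` on polynomials vanishes on the common kernel of the finitely many
functionals `t ↦ t^{(s)}(uᵢ)`, so it is a linear combination of them; as polynomials are dense,
`g` is the corresponding combination of the kernels `k_{s,uᵢ}`.
-/

open Polynomial

namespace Polynomial

variable {K : Type*} [Field K] [CharZero K]

theorem X_sub_C_pow_dvd_iff_isRoot_iterate_derivative {t : K[X]} {a : K} {m : ℕ} :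
    (X - C a) ^ m ∣ t ↔ ∀ s < m, (derivative^[s] t).IsRoot a := by
  rcases eq_or_ne t 0 with rfl | ht
  · simp
  rw [← le_rootMultiplicity_iff ht]
  cases m with
  | zero => simp
  | succ m =>
    rw [Nat.add_one_le_iff, lt_rootMultiplicity_iff_isRoot_iterate_derivative ht]
    simp only [Nat.lt_add_one_iff]

theorem prod_X_sub_C_pow_dvd_iff {ι : Type*} [Fintype ι] {u : ι → K}
    (hu : Function.Injective u) (r : ι → ℕ) {t : K[X]} :
    ∏ i, (X - C (u i)) ^ r i ∣ t ↔ ∀ i, ∀ s < r i, (derivative^[s] t).IsRoot (u i) := by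
  simp_rw [← X_sub_C_pow_dvd_iff_isRoot_iterate_derivative]
  exact ⟨fun h i =>
      (Finset.dvd_prod_of_mem (fun i => (X - C (u i)) ^ r i) (Finset.mem_univ i)).trans h,
    Fintype.prod_dvd_of_coprime fun _ _ hij => IsCoprime.pow (pairwise_coprime_X_sub_C hu hij)⟩

theorem iteratedDeriv_eval {𝕜 : Type*} [NontriviallyNormedField 𝕜] (t : 𝕜[X]) (s : ℕ) :
    iteratedDeriv s (fun z => t.eval z) = fun z => (derivative^[s] t).eval z := by
  induction s with
  | zero => simp
  | succ n ih =>
    rw [iteratedDeriv_succ, ih, Function.iterate_succ_apply']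
    funext z
    exact Polynomial.deriv (p := derivative^[n] t)

end Polynomial

theorem mem_span_range_of_inner_eq_zero_of_denseRange {𝕜 E V ι : Type*} [RCLike 𝕜]
    [NormedAddCommGroup E] [InnerProductSpace 𝕜 E] [AddCommGroup V] [Module 𝕜 V] [Finite ι]
    {R : V →ₗ[𝕜] E} (hR : DenseRange R) {k : ι → E} {g : E}
    (hg : ∀ v, (∀ i, inner 𝕜 (k i) (R v) = 0) → inner 𝕜 g (R v) = 0) :
    g ∈ Submodule.span 𝕜 (Set.range k) := by
  have := Fintype.ofFinite ι
  obtain ⟨c, hc⟩ := (Submodule.mem_span_range_iff_exists_fun 𝕜).1 <|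
    mem_span_of_iInf_ker_le_ker (L := fun i => (innerₛₗ 𝕜 (k i)).comp R)
      (K := (innerₛₗ 𝕜 g).comp R) fun v hv => hg v fun i => (Submodule.mem_iInf _).1 hv i
  refine (Submodule.mem_span_range_iff_exists_fun 𝕜).2 ⟨fun i => starRingEnd 𝕜 (c i), ?_⟩
  refine hR.eq_of_inner_left 𝕜 fun v => ?_
  simpa [sum_inner, inner_smul_left] using LinearMap.congr_fun hc v

namespace RKFramework

variable (F : RKFramework Ω H)

theorem ι_aeval_S (t : ℂ[X]) (f : H) {z : ℂ} (hz : z ∈ Ω) :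
    F.ι (aeval F.S t f) z = t.eval z * F.ι f z := by
  induction t using Polynomial.induction_on generalizing f with
  | C a => simp
  | add p q hp hq => simp [hp, hq, add_mul]
  | monomial n a ih =>
    rw [pow_succ, ← mul_assoc, map_mul, aeval_X, mul_apply_eq_comp, ih,
      F.ι_S _ _ hz]
    simp only [eval_mul, eval_C, eval_pow, eval_X]
    ring

theorem aeval_S_mem_fullSpan (t : ℂ[X]) (f : H) : aeval F.S t f ∈ F.fullSpan f := by
  rw [aeval_eq_sum_range, sum_apply]
  exact Submodule.sum_mem _ fun n _ => Submodule.smul_mem _ _ <|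
    Submodule.le_topologicalClosure _ <| Submodule.subset_span ⟨n, rfl⟩

noncomputable def realize : ℂ[X] →ₗ[ℂ] H where
  toFun t := aeval F.S t (F.p 0)
  map_add' _ _ := by simp
  map_smul' _ _ := by simp

theorem ι_realize (t : ℂ[X]) {z : ℂ} (hz : z ∈ Ω) : F.ι (F.realize t) z = t.eval z := by
  simp [realize, F.ι_aeval_S t _ hz, F.ι_p 0 z hz]

theorem eq_realize_of_ι_eq {f : H} {t : ℂ[X]} (h : ∀ z ∈ Ω, F.ι f z = t.eval z) :
    f = F.realize t :=
  F.ι_inj _ _ fun z hz => by rw [h z hz, F.ι_realize t hz]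

theorem realize_mul (m t : ℂ[X]) : F.realize (m * t) = aeval F.S m (F.realize t) := by
  simp [realize]

theorem realize_mul_mem_fullSpan (m t : ℂ[X]) : F.realize (m * t) ∈ F.fullSpan (F.realize t) :=
  F.realize_mul m t ▸ F.aeval_S_mem_fullSpan m _

theorem denseRange_realize : DenseRange F.realize := by
  have hp : Submodule.span ℂ (Set.range F.p) ≤ LinearMap.range F.realize :=
    Submodule.span_le.2 <| Set.range_subset_iff.2 fun j =>
      ⟨X ^ j, (F.eq_realize_of_ι_eq fun z hz => by simp [F.ι_p j z hz]).symm⟩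
  rw [DenseRange, ← LinearMap.coe_range, Submodule.dense_iff_topologicalClosure_eq_top]
  exact top_unique (F.span_p ▸ Submodule.topologicalClosure_mono hp)

theorem iteratedDerivWithin_ι_realize (t : ℂ[X]) (s : ℕ) {w : ℂ} (hw : w ∈ Ω) :
    iteratedDerivWithin s (F.ι (F.realize t)) Ω w = (derivative^[s] t).eval w := by
  rw [iteratedDerivWithin_congr (fun z hz => F.ι_realize t hz) hw,
    iteratedDerivWithin_of_isOpen F.isOpen hw, Polynomial.iteratedDeriv_eval]

end RKFramework

theorem stmt6_general (F : RKFramework Ω H)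
    (N : ℕ) (u : Fin N → ℂ) (r : Fin N → ℕ)
    (hu : Function.Injective u) (huΩ : ∀ i, u i ∈ Ω)
    (c : ℂ) (hc : c ≠ 0) (q : Polynomial ℂ)
    (hq : q = Polynomial.C c * ∏ i, (Polynomial.X - Polynomial.C (u i)) ^ r i)
    (pH : H) (hpH : ∀ z ∈ Ω, F.ι pH z = q.eval z)
    (ks : Fin N → ℕ → H)
    (hks : ∀ i : Fin N, ∀ s : ℕ, s < r i → ∀ f : H,
      ⟪ks i s, f⟫ = iteratedDerivWithin s (F.ι f) Ω (u i)) :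
    (F.fullSpan pH)ᗮ =
      Submodule.span ℂ {x : H | ∃ i : Fin N, ∃ s : ℕ, s < r i ∧ x = ks i s} := by
  obtain rfl : pH = F.realize q := F.eq_realize_of_ι_eq hpH
  have dvd_iff : ∀ t, q ∣ t ↔ ∀ i, ∀ s < r i, ⟪ks i s, F.realize t⟫ = 0 := fun t => by
    rw [hq, C_mul_dvd hc, prod_X_sub_C_pow_dvd_iff hu]
    refine forall_congr' fun i => forall₂_congr fun s hs => ?_
    rw [hks i s hs, F.iteratedDerivWithin_ι_realize t s (huΩ i), IsRoot.def]
  apply le_antisymm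
  · intro g hg
    refine Submodule.span_mono ?_ <| mem_span_range_of_inner_eq_zero_of_denseRange
      (k := fun x : Σ i, Fin (r i) => ks x.1 x.2) F.denseRange_realize fun t ht => ?_
    · rintro _ ⟨⟨i, s⟩, rfl⟩
      exact ⟨i, s, s.2, rfl⟩
    · obtain ⟨m, rfl⟩ := (dvd_iff t).2 fun i s hs => ht ⟨i, s, hs⟩
      rw [mul_comm]
      exact inner_eq_zero_symm.1 <| hg _ (F.realize_mul_mem_fullSpan m q)
  · rw [Submodule.span_le]
    rintro _ ⟨i, s, hs, rfl⟩
    have shift_ortho : ∀ n, ⟪ks i s, (F.S ^ n) (F.realize q)⟫ = 0 := fun n => by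
      rw [← aeval_X_pow (R := ℂ), ← F.realize_mul]
      exact (dvd_iff _).1 (dvd_mul_left q _) i s hs
    rw [SetLike.mem_coe, Submodule.orthogonal_closure, Submodule.mem_orthogonal']
    exact fun x hx => Submodule.span_le (p := LinearMap.ker (innerₛₗ ℂ (ks i s))).2
      (Set.range_subset_iff.2 shift_ortho) hx

/-- Lemma 4.2: for a nonzero polynomial `q = c ∏ᵢ (X − uᵢ)^{rᵢ}` with distinct zeros
`uᵢ ∈ Ω` of multiplicities `rᵢ`, realized as `pH ∈ H`, the orthogonal complement of
`[pH]` is the linear span of the kernels `k_{s,uᵢ}`, `0 ≤ s ≤ rᵢ − 1`, where `k_{s,uᵢ}`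
represents the functional `f ↦ (ι f)^{(s)}(uᵢ)`. -/
theorem stmt6 (F : RKFramework Ω H)
    (N : ℕ) (u : Fin N → ℂ) (r : Fin N → ℕ)
    (hu : Function.Injective u) (huΩ : ∀ i, u i ∈ Ω) (hr : ∀ i, 1 ≤ r i)
    (c : ℂ) (hc : c ≠ 0) (q : Polynomial ℂ)
    (hq : q = Polynomial.C c * ∏ i, (Polynomial.X - Polynomial.C (u i)) ^ r i)
    (pH : H) (hpH : ∀ z ∈ Ω, F.ι pH z = q.eval z)
    (ks : Fin N → ℕ → H)
    (hks : ∀ i : Fin N, ∀ s : ℕ, s < r i → ∀ f : H,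
      ⟪ks i s, f⟫ = iteratedDerivWithin s (F.ι f) Ω (u i)) :
    (F.fullSpan pH)ᗮ =
      Submodule.span ℂ {x : H | ∃ i : Fin N, ∃ s : ℕ, s < r i ∧ x = ks i s} :=
  stmt6_general F N u r hu huΩ c hc q hq pH hpH ks hks
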